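/- Let G be a finite simple graph with arboricity at most α (α a positive integer). Then G admits an acyclic orientation of its edges in which every vertex has out-degree at most 2α − 1 (i.e., there is an orientation with no directed cycle such that each vertex is the tail of at most 2α − 1 oriented edges). -/

import Mathlib

/-- The number of edges of `G` with both endpoints in the vertex set `S`. -/
def SimpleGraph.edgesWithin {V : Type*} [Fintype V] [DecidableEq V]
    (G : SimpleGraph V) [DecidableRel G.Adj] (S : Finset V) : ℕ :=
  (G.edgeFinset.filter (fun e => ∀ x ∈ e, x ∈ S)).card

/-- `G` has arboricity at most `α` in the density sense. -/
def SimpleGraph.ArboricityAtMost {V : Type*} [Fintype V] [DecidableEq V]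
    (G : SimpleGraph V) [DecidableRel G.Adj] (α : ℕ) : Prop :=
  ∀ S : Finset V, 2 ≤ S.card → G.edgesWithin S ≤ α * (S.card - 1)

/-! A vertex set `S` spans at most `α (|S| - 1)` edges, so the average number of neighbours
inside `S` is below `2α` and some vertex of `S` has at most `2α - 1` of them. Removing such
vertices one at a time ranks the vertices so that each has at most `2α - 1` neighbours of higher
rank; directing every edge towards the higher rank gives the orientation. -/

open Finset

namespace SimpleGraph

variable {V : Type*} [Fintype V] [DecidableEq V] {G : SimpleGraph V} [DecidableRel G.Adj]

theorem edgesWithin_eq_card_inter_sym2 (S : Finset V) :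
    G.edgesWithin S = #(G.edgeFinset ∩ S.sym2) := by
  rw [edgesWithin, filter_mem_eq_inter.symm]
  congr 1
  ext e
  simp [mem_sym2_iff]

theorem sum_card_adj_eq_two_mul_edgesWithin (S : Finset V) :
    ∑ v ∈ S, #{u ∈ S | G.Adj v u} = 2 * G.edgesWithin S := by
  have hedges : #(G.induce (S : Set V)).edgeFinset = G.edgesWithin S := by
    have := congrArg card (map_edgeFinset_induce (G := G) (s := (S : Set V)))
    rw [card_map, toFinset_coe] at this
    convert this
    exact edgesWithin_eq_card_inter_sym2 S
  have hdeg (v : (S : Set V)) : (G.induce (S : Set V)).degree v = #{u ∈ S | G.Adj v u} := by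
    have := congrArg card (map_neighborFinset_induce (G := G) (s := (S : Set V)) v)
    rw [card_map, toFinset_coe, card_neighborFinset_eq_degree] at this
    convert this using 2
    ext u
    simp [and_comm]
  rw [← hedges, ← sum_degrees_eq_twice_card_edges, ← sum_coe_sort S]
  exact Fintype.sum_congr _ _ fun v => (hdeg v).symm

theorem ArboricityAtMost.edgesWithin_le {α : ℕ} (h : G.ArboricityAtMost α) (S : Finset V) :
    G.edgesWithin S ≤ α * (#S - 1) := by
  rcases le_or_gt 2 #S with hS | hS
  · exact h S hS
  suffices G.edgesWithin S = 0 by omega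
  rw [edgesWithin, card_eq_zero, filter_eq_empty_iff]
  intro e he hin
  induction e using Sym2.ind with
  | h x y =>
    have hxy : G.Adj x y := by simpa using he
    have : 1 < #S := one_lt_card.2 ⟨x, hin x (by simp), y, hin y (by simp), hxy.ne⟩
    omega

theorem ArboricityAtMost.exists_card_adj_le {α : ℕ} (h : G.ArboricityAtMost α) {S : Finset V}
    (hS : S.Nonempty) : ∃ v ∈ S, #{u ∈ S | G.Adj v u} ≤ 2 * α - 1 := by
  by_contra! hdense
  have hsum : #S * (2 * α - 1 + 1) ≤ 2 * (α * (#S - 1)) := calc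
    #S * (2 * α - 1 + 1) = ∑ _v ∈ S, (2 * α - 1 + 1) := by rw [sum_const, smul_eq_mul]
    _ ≤ ∑ v ∈ S, #{u ∈ S | G.Adj v u} := sum_le_sum hdense
    _ = 2 * G.edgesWithin S := sum_card_adj_eq_two_mul_edgesWithin S
    _ ≤ 2 * (α * (#S - 1)) := by grw [h.edgesWithin_le S]
  have hcard := hS.card_pos
  rcases Nat.eq_zero_or_pos α with rfl | hα
  · omega
  · rw [Nat.sub_add_cancel (by omega : 1 ≤ 2 * α)] at hsum
    nlinarith [Nat.sub_add_cancel hcard]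

theorem exists_injective_card_adj_lt_le {k : ℕ}
    (h : ∀ S : Finset V, S.Nonempty → ∃ v ∈ S, #{u ∈ S | G.Adj v u} ≤ k) :
    ∃ f : V → ℕ, Function.Injective f ∧ ∀ v, #{u | G.Adj v u ∧ f v < f u} ≤ k := by
  suffices ∀ S : Finset V, ∃ f : V → ℕ, Set.InjOn f S ∧
      ∀ v ∈ S, #{u ∈ S | G.Adj v u ∧ f v < f u} ≤ k by
    simpa [Set.injOn_univ] using this univ
  intro S
  induction S using Finset.strongInduction with
  | H S ih =>
  rcases S.eq_empty_or_nonempty with rfl | hS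
  · exact ⟨fun _ => 0, by simp, by simp⟩
  obtain ⟨w, hwS, hw⟩ := h S hS
  obtain ⟨f, hf, hfS⟩ := ih (S.erase w) (erase_ssubset hwS)
  let g : V → ℕ := fun v => if v = w then 0 else f v + 1
  refine ⟨g, fun a ha b hb hab => ?_, fun v hv => ?_⟩
  · by_cases haw : a = w <;> by_cases hbw : b = w <;>
      simp only [g, haw, hbw, if_true, if_false] at hab
    · exact haw.trans hbw.symm
    · omega
    · omega
    · exact hf (by simp [haw, ha]) (by simp [hbw, hb]) (Nat.succ_injective hab)
  by_cases hvw : v = w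
  · subst hvw
    exact (card_le_card (monotone_filter_right _ fun _ _ hu => hu.1)).trans hw
  have hup : {u ∈ S | G.Adj v u ∧ g v < g u} = {u ∈ S.erase w | G.Adj v u ∧ f v < f u} := by
    ext u
    by_cases huw : u = w <;> simp [g, hvw, huw]
  exact hup ▸ hfS v (mem_erase.2 ⟨hvw, hv⟩)

end SimpleGraph

theorem stmt7_general {V : Type*} [Fintype V] [DecidableEq V]
    (G : SimpleGraph V) [DecidableRel G.Adj] (α : ℕ)
    (harb : G.ArboricityAtMost α) :
    ∃ r : V → V → Prop,
      (∀ u v, G.Adj u v ↔ (r u v ∨ r v u)) ∧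
      (∀ u v, ¬(r u v ∧ r v u)) ∧
      (∀ v, ¬ Relation.TransGen r v v) ∧
      (∀ v, Nat.card {u : V // r v u} ≤ 2 * α - 1) := by
  obtain ⟨f, hf, hout⟩ :=
    SimpleGraph.exists_injective_card_adj_lt_le fun _ hS => harb.exists_card_adj_le hS
  refine ⟨fun u v => G.Adj u v ∧ f u < f v, fun u v => ?_,
    fun u v ⟨⟨_, huv⟩, ⟨_, hvu⟩⟩ => huv.asymm hvu, fun v hv => ?_, fun v => ?_⟩
  · constructor
    · intro h
      rcases (hf.ne h.ne).lt_or_gt with hlt | hgt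
      exacts [Or.inl ⟨h, hlt⟩, Or.inr ⟨h.symm, hgt⟩]
    · rintro (⟨h, -⟩ | ⟨h, -⟩)
      exacts [h, h.symm]
  · have hlt := hv.lift f fun _ _ h => h.2
    rw [Relation.transGen_eq_self] at hlt
    exact lt_irrefl _ hlt
  · rw [Nat.card_eq_fintype_card, Fintype.card_subtype]
    exact hout v

/-- Every finite simple graph of arboricity at most `α` admits an acyclic orientation
(`r` directs each edge in exactly one way and has no directed cycle, i.e. its transitive
closure is irreflexive) in which every vertex has out-degree at most `2α - 1`. -/
theorem stmt7 {V : Type*} [Fintype V] [DecidableEq V]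
    (G : SimpleGraph V) [DecidableRel G.Adj] (α : ℕ) (hα : 0 < α)
    (harb : G.ArboricityAtMost α) :
    ∃ r : V → V → Prop,
      (∀ u v, G.Adj u v ↔ (r u v ∨ r v u)) ∧
      (∀ u v, ¬(r u v ∧ r v u)) ∧
      (∀ v, ¬ Relation.TransGen r v v) ∧
      (∀ v, Nat.card {u : V // r v u} ≤ 2 * α - 1) :=
  stmt7_general G α harb
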